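/- Fix p ∈ (0,1], dimensions N ≥ D ≥ 1, and two density matrices σ, ρ on an N-dimensional system with trace distance (1/2)‖σ−ρ‖₁ ≤ τ_D. Let E(ρ) = (p/N)·I + (1−p)·ρ, and let Π be a rank-D orthogonal projection. Then, provided Tr(Π·E(σ)) ≥ p/D, we have Tr(Π·E(ρ)) ≤ e^ε · Tr(Π·E(σ)) with ε = log(1 + D·(1−p)·τ_D / p). -/

import Mathlib

open Matrix ComplexOrder

/-- Trace norm `‖A‖₁ = Tr √(Aᴴ A)`. -/
noncomputable def traceNorm {n : Type*} [Fintype n] [DecidableEq n]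
    (A : Matrix n n ℂ) : ℝ :=
  ((((Matrix.posSemidef_conjTranspose_mul_self A).1.eigenvectorUnitary : Matrix n n ℂ) *
      diagonal (((↑) : ℝ → ℂ) ∘ (Real.sqrt ·) ∘ (Matrix.posSemidef_conjTranspose_mul_self A).1.eigenvalues) *
      (star (Matrix.posSemidef_conjTranspose_mul_self A).1.eigenvectorUnitary : Matrix n n ℂ))).trace.re

/-- A density matrix: positive semidefinite with trace 1. -/
def IsDensityMatrix {n : Type*} [Fintype n] [DecidableEq n] (ρ : Matrix n n ℂ) : Prop :=
  ρ.PosSemidef ∧ ρ.trace = 1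

section Aux
variable {N : ℕ}

/-- trace norm of a Hermitian matrix is the sum of abs of eigenvalues -/
lemma traceNorm_eq_sum_abs_eigenvalues (Δ : Matrix (Fin N) (Fin N) ℂ)
    (hΔ : Δ.IsHermitian) : traceNorm Δ = ∑ i, |hΔ.eigenvalues i| := by
  set U : Matrix (Fin N) (Fin N) ℂ := (hΔ.eigenvectorUnitary : Matrix (Fin N) (Fin N) ℂ) with hUdef
  have hU1 : star U * U = 1 := Matrix.mem_unitaryGroup_iff'.mp hΔ.eigenvectorUnitary.2
  have hH : (Δᴴ * Δ).IsHermitian := (Matrix.posSemidef_conjTranspose_mul_self Δ).1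
  have h2 : hH.cfc Real.sqrt = hΔ.cfc (fun x => |x|) := by
    rw [← hH.cfc_eq, ← hΔ.cfc_eq, hΔ.eq, ← pow_two,
      ← cfc_comp_pow Real.sqrt 2 Δ (ha := hΔ.isSelfAdjoint)]
    apply cfc_congr
    intro x _
    simp [Real.sqrt_sq_eq_abs]
  have hM : traceNorm Δ = (hH.cfc Real.sqrt).trace.re := rfl
  rw [hM, h2, Matrix.IsHermitian.cfc, Unitary.conjStarAlgAut_apply, ← hUdef,
    Matrix.trace_mul_cycle, hU1, Matrix.one_mul, Matrix.trace_diagonal]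
  simp [Complex.re_sum]

/-- key inequality: |Re Tr(P Δ)| ≤ (1/2)‖Δ‖₁ for Hermitian traceless Δ and projection P -/
lemma key_ineq (P Δ : Matrix (Fin N) (Fin N) ℂ)
    (hPherm : P.IsHermitian) (hPproj : P * P = P)
    (hΔ : Δ.IsHermitian) (htr : Δ.trace = 0) :
    |((P * Δ).trace).re| ≤ (1 / 2) * traceNorm Δ := by
  set U : Matrix (Fin N) (Fin N) ℂ := (hΔ.eigenvectorUnitary : Matrix (Fin N) (Fin N) ℂ) with hUdef
  have hU1 : star U * U = 1 := Matrix.mem_unitaryGroup_iff'.mp hΔ.eigenvectorUnitary.2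
  have hU2 : U * star U = 1 := Matrix.mem_unitaryGroup_iff.mp hΔ.eigenvectorUnitary.2
  set lam : Fin N → ℝ := hΔ.eigenvalues with hlam
  set Q : Matrix (Fin N) (Fin N) ℂ := star U * P * U with hQdef
  -- Q is a projection
  have hQproj : Q * Q = Q := by
    rw [hQdef]
    calc star U * P * U * (star U * P * U) = star U * (P * (U * star U) * P) * U := by
          simp only [Matrix.mul_assoc]
      _ = star U * P * U := by rw [hU2, Matrix.mul_one, hPproj, Matrix.mul_assoc]
  have hQherm : Qᴴ = Q := by
    rw [hQdef, Matrix.conjTranspose_mul, Matrix.conjTranspose_mul, hPherm.eq,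
      Matrix.star_eq_conjTranspose, Matrix.conjTranspose_conjTranspose]
    rw [Matrix.mul_assoc]
  -- diagonal entries of a Hermitian projection are in [0,1]
  have hdiag_nonneg : ∀ (R : Matrix (Fin N) (Fin N) ℂ), Rᴴ = R → R * R = R →
      ∀ i, 0 ≤ (R i i).re := by
    intro R hh hp i
    have h2 : R i i = (Rᴴ * R) i i := by rw [hh, hp]
    rw [h2, Matrix.mul_apply, Complex.re_sum]
    apply Finset.sum_nonneg
    intro j _
    simp only [Matrix.conjTranspose_apply, Matrix.star_apply]
    have : (star (R j i) * R j i).re = Complex.normSq (R j i) := by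
      simp [Complex.normSq_apply, Complex.mul_re]
    rw [this]
    exact Complex.normSq_nonneg _
  have hc0 : ∀ i, 0 ≤ (Q i i).re := hdiag_nonneg Q hQherm hQproj
  have hc1 : ∀ i, (Q i i).re ≤ 1 := by
    intro i
    have h := hdiag_nonneg (1 - Q) (by rw [Matrix.conjTranspose_sub, hQherm]; simp)
      (by rw [sub_mul, one_mul, mul_sub, mul_one, hQproj]; abel) i
    have h2 : ((1 : Matrix (Fin N) (Fin N) ℂ) - Q) i i = 1 - Q i i := by
      simp [Matrix.sub_apply, Matrix.one_apply]
    rw [h2] at h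
    simp only [Complex.sub_re, Complex.one_re] at h
    linarith
  -- trace of P * Δ
  have hPD : (P * Δ).trace = ∑ i, Q i i * (lam i : ℂ) := by
    have h1 : P * Δ = P * U * Matrix.diagonal (RCLike.ofReal ∘ hΔ.eigenvalues) * star U := by
      conv_lhs => rw [hΔ.spectral_theorem, Unitary.conjStarAlgAut_apply]
      rw [← hUdef]
      simp only [Matrix.mul_assoc]
    rw [h1, Matrix.trace_mul_comm]
    simp only [← Matrix.mul_assoc]
    rw [← hQdef, Matrix.trace]
    apply Finset.sum_congr rfl
    intro i _
    simp [Matrix.diag, Matrix.mul_diagonal, Function.comp, hlam]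
  have hre : ((P * Δ).trace).re = ∑ i, (Q i i).re * lam i := by
    rw [hPD, Complex.re_sum]
    apply Finset.sum_congr rfl
    intro i _
    simp [Complex.mul_re]
  -- sum of eigenvalues is zero
  have hsum0 : ∑ i, lam i = 0 := by
    have h1 : Δ.trace = ∑ i, (lam i : ℂ) := by
      conv_lhs => rw [hΔ.spectral_theorem, Unitary.conjStarAlgAut_apply]
      rw [← hUdef, Matrix.trace_mul_cycle, hU1, Matrix.one_mul, Matrix.trace_diagonal]
      simp [hlam]
    rw [htr] at h1
    have := congrArg Complex.re h1.symm
    simpa [Complex.re_sum] using this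
  rw [hre, traceNorm_eq_sum_abs_eigenvalues Δ hΔ, ← hlam]
  -- pure real analysis now
  have hmaxmin : ∑ i, max (lam i) 0 = (1/2) * ∑ i, |lam i| ∧
      ∑ i, min (lam i) 0 = -((1/2) * ∑ i, |lam i|) := by
    have h1 : ∑ i, (max (lam i) 0 + min (lam i) 0) = 0 := by
      simp only [max_add_min, add_zero]; exact hsum0
    have h2 : ∑ i, (max (lam i) 0 - min (lam i) 0) = ∑ i, |lam i| := by
      apply Finset.sum_congr rfl
      intro i _
      rcases le_total (lam i) 0 with h | h
      · rw [max_eq_right h, min_eq_left h, abs_of_nonpos h]; ring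
      · rw [max_eq_left h, min_eq_right h, abs_of_nonneg h]; ring
    rw [Finset.sum_add_distrib] at h1
    rw [Finset.sum_sub_distrib] at h2
    constructor <;> linarith
  rw [abs_le]
  constructor
  · calc -(1/2 * ∑ i, |lam i|) = ∑ i, min (lam i) 0 := hmaxmin.2.symm
      _ ≤ ∑ i, (Q i i).re * lam i := by
          apply Finset.sum_le_sum
          intro i _
          rcases le_total (lam i) 0 with h | h
          · rw [min_eq_left h]; nlinarith [hc0 i, hc1 i]
          · rw [min_eq_right h]; nlinarith [hc0 i, hc1 i]
  · calc ∑ i, (Q i i).re * lam i ≤ ∑ i, max (lam i) 0 := by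
          apply Finset.sum_le_sum
          intro i _
          rcases le_total (lam i) 0 with h | h
          · rw [max_eq_right h]; nlinarith [hc0 i, hc1 i]
          · rw [max_eq_left h]; nlinarith [hc0 i, hc1 i]
      _ = 1/2 * ∑ i, |lam i| := hmaxmin.1

end Aux

/-- Zhou–Ying ε-DP bound for the depolarizing channel. -/
theorem depolarizing_DP_bound {N : ℕ} (hN : 1 ≤ N) (p : ℝ)
    (hp0 : 0 < p) (hp1 : p ≤ 1) (D : ℕ) (hD : 1 ≤ D) (hDN : D ≤ N)
    (τD : ℝ) (hτD : 0 ≤ τD)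
    (E : Matrix (Fin N) (Fin N) ℂ → Matrix (Fin N) (Fin N) ℂ)
    (hE : ∀ ρ : Matrix (Fin N) (Fin N) ℂ,
      E ρ = ((p : ℂ) / N) • (1 : Matrix (Fin N) (Fin N) ℂ) + ((1 : ℂ) - p) • ρ)
    (P : Matrix (Fin N) (Fin N) ℂ)
    (hPherm : P.IsHermitian) (hPproj : P * P = P) (hrank : P.rank = D)
    (σ ρ : Matrix (Fin N) (Fin N) ℂ)
    (hσ : IsDensityMatrix σ) (hρ : IsDensityMatrix ρ)
    (hdist : (1 / 2) * traceNorm (σ - ρ) ≤ τD)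
    (hfloor : p / D ≤ ((P * E σ).trace).re) :
    ((P * E ρ).trace).re ≤
      Real.exp (Real.log (1 + D * (1 - p) * τD / p)) * ((P * E σ).trace).re := by
  have hDpos : (0 : ℝ) < D := by exact_mod_cast hD
  have hc0 : 0 ≤ (D : ℝ) * (1 - p) * τD / p := by
    apply div_nonneg _ hp0.le
    apply mul_nonneg (mul_nonneg hDpos.le (by linarith)) hτD
  have hpos : 0 < 1 + (D : ℝ) * (1 - p) * τD / p := by linarith
  -- expansion of the traces
  have expand : ∀ X : Matrix (Fin N) (Fin N) ℂ,
      ((P * E X).trace).re = (p / N) * (P.trace).re + (1 - p) * ((P * X).trace).re := by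
    intro X
    have h : (P * E X).trace = ((p : ℂ) / N) * P.trace + ((1 : ℂ) - (p : ℂ)) * (P * X).trace := by
      rw [hE X, Matrix.mul_add, Matrix.mul_smul, Matrix.mul_smul, Matrix.mul_one,
        Matrix.trace_add, Matrix.trace_smul, Matrix.trace_smul, smul_eq_mul, smul_eq_mul]
    rw [h, show ((p : ℂ) / N) = ((p / N : ℝ) : ℂ) by push_cast; ring,
      show ((1 : ℂ) - (p : ℂ)) = ((1 - p : ℝ) : ℂ) by push_cast; ring]
    simp [Complex.add_re, Complex.re_ofReal_mul]
  -- the trace distance bound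
  set a : ℝ := ((P * ρ).trace).re with hadef
  set b : ℝ := ((P * σ).trace).re with hbdef
  have hherm : (σ - ρ).IsHermitian := hσ.1.1.sub hρ.1.1
  have htr0 : (σ - ρ).trace = 0 := by
    rw [Matrix.trace_sub, hσ.2, hρ.2, sub_self]
  have hkey := key_ineq P (σ - ρ) hPherm hPproj hherm htr0
  have hba : ((P * (σ - ρ)).trace).re = b - a := by
    rw [Matrix.mul_sub, Matrix.trace_sub]
    simp [hadef, hbdef]
  rw [hba] at hkey
  have hab : |b - a| ≤ τD := le_trans hkey hdist
  have h1 : a ≤ b + τD := by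
    have := abs_le.mp hab; linarith
  -- put it together
  rw [Real.exp_log hpos, expand ρ]
  have hTσ : ((P * E σ).trace).re = (p / N) * (P.trace).re + (1 - p) * b := expand σ
  set T : ℝ := ((P * E σ).trace).re with hTdef
  have hceq : ((D : ℝ) * (1 - p) * τD / p) * (p / D) = (1 - p) * τD := by
    field_simp
  have h2 : ((D : ℝ) * (1 - p) * τD / p) * (p / D) ≤ ((D : ℝ) * (1 - p) * τD / p) * T :=
    mul_le_mul_of_nonneg_left hfloor hc0
  have h3 : (1 - p) * a ≤ (1 - p) * (b + τD) :=
    mul_le_mul_of_nonneg_left h1 (by linarith)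
  have h4 : (1 + (D : ℝ) * (1 - p) * τD / p) * T = T + ((D : ℝ) * (1 - p) * τD / p) * T := by
    ring
  rw [h4]
  rw [hTσ]
  nlinarith [h2, h3, hceq]
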